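/- arXiv:1709.00830 — 6 statements merged into one kernel-verified Lean document; each statement's English description precedes it below -/
import Mathlib

section
/- Let (B, ⊑) be an ordered functor on Set, and let h be a B-coalgebra homomorphism from (X, f) to (X', f') and k a B-coalgebra homomorphism from (Y, g) to (Y', g'). Then h and k preserve similarity: for all x ∈ X and y ∈ Y, if x ≲_f^g y then h(x) ≲_{f'}^{g'} k(y). -/
/-- A `Set`-endofunctor, presented concretely. -/
structure SetFunctor where
  obj : Type → Type
  map : {X Y : Type} → (X → Y) → obj X → obj Y
  map_id : ∀ {X : Type}, map (id : X → X) = id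
  map_comp : ∀ {X Y Z : Type} (f : X → Y) (g : Y → Z), map (g ∘ f) = map g ∘ map f

/-- An ordered functor: a `Set`-functor together with a preorder on each `B X`,
such that `B f` is monotone for every `f`. -/
structure OrderedFunctor extends SetFunctor where
  le : {X : Type} → obj X → obj X → Prop
  le_refl : ∀ {X : Type} (b : obj X), le b b
  le_trans : ∀ {X : Type} {a b c : obj X}, le a b → le b c → le a c
  map_mono : ∀ {X Y : Type} (f : X → Y) {b c : obj X}, le b c → le (map f b) (map f c)

/-- The canonical relation lifting of a `Set`-functor. -/
def SetFunctor.relLift (B : SetFunctor) {X Y : Type} (R : X → Y → Prop)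
    (b : B.obj X) (c : B.obj Y) : Prop :=
  ∃ d : B.obj {p : X × Y // R p.1 p.2},
    B.map (fun p => p.1.1) d = b ∧ B.map (fun p => p.1.2) d = c

/-- The lax relation lifting `⊑ ∘ Rel(B)(R) ∘ ⊑` of an ordered functor. -/
def OrderedFunctor.laxRelLift (B : OrderedFunctor) {X Y : Type} (R : X → Y → Prop)
    (b : B.obj X) (c : B.obj Y) : Prop :=
  ∃ b' c', B.le b b' ∧ B.toSetFunctor.relLift R b' c' ∧ B.le c' c

/-- `R` is a simulation between coalgebras `f` and `g`. -/
def OrderedFunctor.IsSimulation (B : OrderedFunctor) {X Y : Type}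
    (f : X → B.obj X) (g : Y → B.obj Y) (R : X → Y → Prop) : Prop :=
  ∀ x y, R x y → B.laxRelLift R (f x) (g y)

/-- Similarity: the greatest simulation (union of all simulations). -/
def OrderedFunctor.Sim (B : OrderedFunctor) {X Y : Type}
    (f : X → B.obj X) (g : Y → B.obj Y) (x : X) (y : Y) : Prop :=
  ∃ R, B.IsSimulation f g R ∧ R x y

/-- The ordered functor `B(-) × Z`, with `(b,z) ⊑̃ (c,z') iff b ⊑ c ∧ z = z'`. -/
def OrderedFunctor.prodConst (B : OrderedFunctor) (Z : Type) : OrderedFunctor where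
  obj X := B.obj X × Z
  map f p := (B.map f p.1, p.2)
  map_id := by intro X; funext p; simp [SetFunctor.map_id]
  map_comp := by intro X Y Z' f g; funext p; simp [SetFunctor.map_comp]
  le p q := B.le p.1 q.1 ∧ p.2 = q.2
  le_refl := by intro X p; exact ⟨B.le_refl _, rfl⟩
  le_trans := by intro X a b c h1 h2; exact ⟨B.le_trans h1.1 h2.1, h1.2.trans h2.2⟩
  map_mono := by intro X Y f b c h; exact ⟨B.map_mono f h.1, h.2⟩

/-- `h` is a `B`-coalgebra homomorphism from `(X, f)` to `(Y, g)`. -/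
def IsCoalgHom (B : SetFunctor) {X Y : Type} (f : X → B.obj X) (g : Y → B.obj Y)
    (h : X → Y) : Prop :=
  ∀ x, B.map h (f x) = g (h x)

/-- A cofree comonad for `B`: for every `X`, `⟨θ_X, ε_X⟩ : B^∞X → B(B^∞X) × X` is a
final coalgebra for `B(-) × X`; `ext f p` is the unique mediating homomorphism. -/
structure Cofree (B : SetFunctor) where
  obj : Type → Type
  θ : {X : Type} → obj X → B.obj (obj X)
  ε : {X : Type} → obj X → X
  ext : {X C : Type} → (C → B.obj C) → (C → X) → C → obj X
  θ_ext : ∀ {X C : Type} (f : C → B.obj C) (p : C → X) (c : C),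
    θ (ext f p c) = B.map (ext f p) (f c)
  ε_ext : ∀ {X C : Type} (f : C → B.obj C) (p : C → X) (c : C),
    ε (ext f p c) = p c
  ext_unique : ∀ {X C : Type} (f : C → B.obj C) (p : C → X) (h : C → obj X),
    (∀ c, θ (h c) = B.map h (f c)) → (∀ c, ε (h c) = p c) → h = ext f p

/-- The functorial action of the cofree comonad `B^∞`. -/
def Cofree.cmap {B : SetFunctor} (W : Cofree B) {X Y : Type} (h : X → Y) :
    W.obj X → W.obj Y :=
  W.ext W.θ (h ∘ W.ε)

/-- The coinductive extension `f^∞ : X → B^∞X` of a coalgebra `f : X → BX`. -/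
def Cofree.coext {B : SetFunctor} (W : Cofree B) {X : Type} (f : X → B.obj X) :
    X → W.obj X :=
  W.ext f id

/-- The comultiplication `δ : B^∞ ⇒ B^∞B^∞` of the cofree comonad. -/
def Cofree.δ {B : SetFunctor} (W : Cofree B) {X : Type} : W.obj X → W.obj (W.obj X) :=
  W.ext W.θ id

/-- The similarity order `≲_{B^∞X}` on the cofree coalgebra `B^∞X`: similarity of
`⟨θ_X, ε_X⟩` with itself for the ordered functor `B(-) × X`. -/
def cofreeSim (B : OrderedFunctor) (W : Cofree B.toSetFunctor) (X : Type) :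
    W.obj X → W.obj X → Prop :=
  (B.prodConst X).Sim (fun w => (W.θ w, W.ε w)) (fun w => (W.θ w, W.ε w))

/-- A free monad for `Σ`: `[ι_X, η_X] : Σ(Σ*X) + X → Σ*X` is an initial algebra
for `Σ(-) + X`, with `fold` the unique mediating algebra homomorphism, and
(by Lambek's lemma) `[ι_X, η_X]` is an isomorphism with inverse `dest`. -/
structure FreeMonad (S : SetFunctor) where
  obj : Type → Type
  η : {X : Type} → X → obj X
  ι : {X : Type} → S.obj (obj X) → obj X
  fold : {X A : Type} → (S.obj A → A) → (X → A) → obj X → A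
  fold_ι : ∀ {X A : Type} (a : S.obj A → A) (h : X → A) (t : S.obj (obj X)),
    fold a h (ι t) = a (S.map (fold a h) t)
  fold_η : ∀ {X A : Type} (a : S.obj A → A) (h : X → A) (x : X),
    fold a h (η x) = h x
  fold_unique : ∀ {X A : Type} (a : S.obj A → A) (h : X → A) (k : obj X → A),
    (∀ t, k (ι t) = a (S.map k t)) → (∀ x, k (η x) = h x) → k = fold a h
  dest : {X : Type} → obj X → S.obj (obj X) ⊕ X
  dest_ι : ∀ {X : Type} (t : S.obj (obj X)), dest (ι t) = Sum.inl t
  dest_η : ∀ {X : Type} (x : X), dest (η x) = Sum.inr x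
  elim_dest : ∀ {X : Type} (t : obj X), Sum.elim ι η (dest t) = t

/-- The functorial action of the free monad `Σ*`. -/
def FreeMonad.mmap {S : SetFunctor} (M : FreeMonad S) {X Y : Type} (h : X → Y) :
    M.obj X → M.obj Y :=
  M.fold M.ι (M.η ∘ h)

/-- The multiplication `μ : Σ*Σ* ⇒ Σ*` of the free monad. -/
def FreeMonad.μ {S : SetFunctor} (M : FreeMonad S) {X : Type} :
    M.obj (M.obj X) → M.obj X :=
  M.fold M.ι id

/-- A biGSOS specification: a natural transformation `ρ : ΣB^∞ ⇒ BΣ*`. -/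
structure BiGSOS (S : SetFunctor) (B : OrderedFunctor) (W : Cofree B.toSetFunctor)
    (M : FreeMonad S) where
  app : {X : Type} → S.obj (W.obj X) → B.obj (M.obj X)
  naturality : ∀ {X Y : Type} (h : X → Y) (u : S.obj (W.obj X)),
    app (S.map (W.cmap h) u) = B.map (M.mmap h) (app u)

/-- Monotonicity of a biGSOS specification. -/
def BiGSOS.Monotone {S : SetFunctor} {B : OrderedFunctor} {W : Cofree B.toSetFunctor}
    {M : FreeMonad S} (ρ : BiGSOS S B W M) : Prop :=
  ∀ (X : Type) (u v : S.obj (W.obj X)),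
    S.relLift (cofreeSim B W X) u v → B.le (ρ.app u) (ρ.app v)

/-- The map `φ(f) = Bμ_∅ ∘ ρ_{Σ*∅} ∘ Σ(f^∞) ∘ ι_∅⁻¹` on coalgebras `Σ*∅ → BΣ*∅`. -/
def phi0 {S : SetFunctor} {B : OrderedFunctor} {W : Cofree B.toSetFunctor}
    {M : FreeMonad S} (ρ : BiGSOS S B W M)
    (f : M.obj Empty → B.obj (M.obj Empty)) : M.obj Empty → B.obj (M.obj Empty) :=
  fun t => Sum.elim (fun s => B.map M.μ (ρ.app (S.map (W.coext f) s)))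
    (fun x => x.elim) (M.dest t)

/-- The map `φ_c(f) = [Bμ_X ∘ ρ_{Σ*X} ∘ Σ(f^∞), Bη_X ∘ c] ∘ [ι_X, η_X]⁻¹` on
coalgebras `Σ*X → BΣ*X`, for a coalgebra `c : X → BX`. -/
def phiC {S : SetFunctor} {B : OrderedFunctor} {W : Cofree B.toSetFunctor}
    {M : FreeMonad S} (ρ : BiGSOS S B W M) {X : Type} (c : X → B.obj X)
    (f : M.obj X → B.obj (M.obj X)) : M.obj X → B.obj (M.obj X) :=
  fun t => Sum.elim (fun s => B.map M.μ (ρ.app (S.map (W.coext f) s)))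
    (fun x => B.map M.η (c x)) (M.dest t)

/-- A supported model of a biGSOS specification `ρ`. -/
def IsSupportedModel {S : SetFunctor} {B : OrderedFunctor} {W : Cofree B.toSetFunctor}
    {M : FreeMonad S} (ρ : BiGSOS S B W M)
    (f : M.obj Empty → B.obj (M.obj Empty)) : Prop :=
  ∀ t : S.obj (M.obj Empty), f (M.ι t) = B.map M.μ (ρ.app (S.map (W.coext f) t))

/-- The least supported model of `ρ` (least w.r.t. the pointwise order). -/
def IsLeastSupportedModel {S : SetFunctor} {B : OrderedFunctor} {W : Cofree B.toSetFunctor}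
    {M : FreeMonad S} (ρ : BiGSOS S B W M)
    (m : M.obj Empty → B.obj (M.obj Empty)) : Prop :=
  IsSupportedModel ρ m ∧ ∀ f, IsSupportedModel ρ f → ∀ t, B.le (m t) (f t)

/-- `u` is a least upper bound of `D` with respect to the relation `le`. -/
def IsLubRel {α : Type} (le : α → α → Prop) (D : Set α) (u : α) : Prop :=
  (∀ a ∈ D, le a u) ∧ ∀ v, (∀ a ∈ D, le a v) → le u v

/-- `le` makes `α` into a pointed DCPO: a partial order with a least element in
which every nonempty directed subset has a least upper bound. -/
def IsPointedDCPO {α : Type} (le : α → α → Prop) : Prop :=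
  (∀ a b : α, le a b → le b a → a = b) ∧
  (∃ bot : α, ∀ a, le bot a) ∧
  ∀ D : Set α, D.Nonempty → DirectedOn le D → ∃ u, IsLubRel le D u

/-- A `DCPO_⊥`-ordered functor: each `BX` is a pointed DCPO and each `Bf` is continuous. -/
structure DCPOOrderedFunctor extends OrderedFunctor where
  dcpo : ∀ X : Type, IsPointedDCPO (fun a b : obj X => le a b)
  map_cont : ∀ {X Y : Type} (f : X → Y) (D : Set (obj X)) (u : obj X),
    D.Nonempty → DirectedOn (fun a b => le a b) D →
    IsLubRel (fun a b => le a b) D u →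
    IsLubRel (fun a b => le a b) (map f '' D) (map f u)

/-- Preservation of weak pullbacks by a `Set`-functor. -/
def SetFunctor.PreservesWeakPullbacks (B : SetFunctor) : Prop :=
  ∀ {X Y Z : Type} (f : X → Z) (g : Y → Z) (u : B.obj X) (v : B.obj Y),
    B.map f u = B.map g v →
    ∃ d : B.obj {p : X × Y // f p.1 = g p.2},
      B.map (fun p => p.1.1) d = u ∧ B.map (fun p => p.1.2) d = v

/-- `m` is the least fixed point of `φ` on coalgebras with carrier `C`. -/
def IsLfpCoalg (B : OrderedFunctor) {C : Type}
    (φ : (C → B.obj C) → (C → B.obj C)) (m : C → B.obj C) : Prop :=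
  φ m = m ∧ ∀ f, φ f = f → ∀ t, B.le (m t) (f t)

/-- A distributive law `λ : Σ*B^∞ ⇒ B^∞Σ*` of the free monad `Σ*` over the cofree
comonad `B^∞`. -/
structure DistLaw (S B : SetFunctor) (W : Cofree B) (M : FreeMonad S) where
  app : {X : Type} → M.obj (W.obj X) → W.obj (M.obj X)
  naturality : ∀ {X Y : Type} (h : X → Y) (t : M.obj (W.obj X)),
    app (M.mmap (W.cmap h) t) = W.cmap (M.mmap h) (app t)
  unit : ∀ {X : Type} (w : W.obj X), app (M.η w) = W.cmap M.η w
  counit : ∀ {X : Type} (t : M.obj (W.obj X)), W.ε (app t) = M.mmap W.ε t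
  mult : ∀ {X : Type} (t : M.obj (M.obj (W.obj X))),
    app (M.μ t) = W.cmap M.μ (app (M.mmap app t))
  comult : ∀ {X : Type} (t : M.obj (W.obj X)),
    W.δ (app t) = W.cmap app (app (M.mmap W.δ t))

theorem statement1 (B : OrderedFunctor) (X X' Y Y' : Type)
    (f : X → B.obj X) (f' : X' → B.obj X') (g : Y → B.obj Y) (g' : Y' → B.obj Y')
    (h : X → X') (k : Y → Y')
    (hh : IsCoalgHom B.toSetFunctor f f' h) (hk : IsCoalgHom B.toSetFunctor g g' k)
    (x : X) (y : Y) (hxy : B.Sim f g x y) :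
    B.Sim f' g' (h x) (k y) := by
  obtain ⟨R, hR, hRxy⟩ := hxy
  refine ⟨fun x' y' => ∃ x y, R x y ∧ h x = x' ∧ k y = y', ?_, ⟨x, y, hRxy, rfl, rfl⟩⟩
  rintro x' y' ⟨x, y, hxy, rfl, rfl⟩
  obtain ⟨b', c', hb, ⟨d, hd1, hd2⟩, hc⟩ := hR x y hxy
  rw [← hh x, ← hk y]
  refine ⟨B.map h b', B.map k c', B.map_mono h hb, ?_, B.map_mono k hc⟩
  refine ⟨B.map (fun p : {p : X × Y // R p.1 p.2} =>
      (⟨(h p.1.1, k p.1.2), p.1.1, p.1.2, p.2, rfl, rfl⟩ :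
        {q : X' × Y' // ∃ a b, R a b ∧ h a = q.1 ∧ k b = q.2})) d, ?_, ?_⟩
  · rw [← Function.comp_apply (f := B.map _), ← B.map_comp]
    have : ((fun q : {q : X' × Y' // ∃ a b, R a b ∧ h a = q.1 ∧ k b = q.2} => q.1.1) ∘
        fun p : {p : X × Y // R p.1 p.2} =>
          (⟨(h p.1.1, k p.1.2), p.1.1, p.1.2, p.2, rfl, rfl⟩ :
            {q : X' × Y' // ∃ a b, R a b ∧ h a = q.1 ∧ k b = q.2}))
        = h ∘ (fun p => p.1.1) := rfl
    rw [this, B.map_comp, Function.comp_apply, hd1]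
  · rw [← Function.comp_apply (f := B.map _), ← B.map_comp]
    have : ((fun q : {q : X' × Y' // ∃ a b, R a b ∧ h a = q.1 ∧ k b = q.2} => q.1.2) ∘
        fun p : {p : X × Y // R p.1 p.2} =>
          (⟨(h p.1.1, k p.1.2), p.1.1, p.1.2, p.2, rfl, rfl⟩ :
            {q : X' × Y' // ∃ a b, R a b ∧ h a = q.1 ∧ k b = q.2}))
        = k ∘ (fun p => p.1.2) := rfl
    rw [this, B.map_comp, Function.comp_apply, hd2]
end

section
/- Let (B, ⊑) be an ordered functor on Set with a cofree comonad B^∞, and let f, g : X → BX be B-coalgebras on a common carrier X. If f(x) ⊑_{BX} g(x) for all x ∈ X, then f^∞(x) ≲_{B^∞X} g^∞(x) for all x ∈ X, where f^∞ and g^∞ are the coinductive extensions of f and g. -/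
theorem statement2 (B : OrderedFunctor) (W : Cofree B.toSetFunctor) (X : Type)
    (f g : X → B.obj X) (hfg : ∀ x, B.le (f x) (g x)) :
    ∀ x, cofreeSim B W X (W.coext f x) (W.coext g x) := by
  intro x0
  refine ⟨fun w w' => ∃ x, w = W.coext f x ∧ w' = W.coext g x, ?_, x0, rfl, rfl⟩
  rintro w w' ⟨x, rfl, rfl⟩
  refine ⟨(B.map (W.coext f) (g x), x), (B.map (W.coext g) (g x), x), ?_, ?_, ?_⟩
  · constructor
    · show B.le (W.θ (W.coext f x)) _
      rw [Cofree.coext, W.θ_ext]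
      exact B.map_mono _ (hfg x)
    · simp [Cofree.coext, W.ε_ext]
  · refine ⟨(B.map (fun y => (⟨(W.coext f y, W.coext g y), y, rfl, rfl⟩ :
      {p : W.obj X × W.obj X // ∃ x, p.1 = W.coext f x ∧ p.2 = W.coext g x})) (g x), x), ?_, ?_⟩
    · show (B.map _ (B.map _ (g x)), x) = _
      rw [← Function.comp_apply (f := B.map _) (g := B.map _), ← B.map_comp]
      rfl
    · show (B.map _ (B.map _ (g x)), x) = _
      rw [← Function.comp_apply (f := B.map _) (g := B.map _), ← B.map_comp]
      rfl
  · constructor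
    · show B.le _ (W.θ (W.coext g x))
      rw [Cofree.coext, W.θ_ext]
      exact B.le_refl _
    · simp [Cofree.coext, W.ε_ext]
end

section
/- Let (B, ⊑) be an ordered functor on Set which preserves weak pullbacks and has a cofree comonad B^∞, and let f : X → BX, g : Y → BY be B-coalgebras and h : X → Y a function. (i) If (Bh ∘ f)(x) ⊑_{BY} (g ∘ h)(x) for all x ∈ X, then (B^∞h ∘ f^∞)(x) ≲_{B^∞Y} (g^∞ ∘ h)(x) for all x ∈ X. (ii) Conversely, if (g ∘ h)(x) ⊑_{BY} (Bh ∘ f)(x) for all x ∈ X, then (g^∞ ∘ h)(x) ≲_{B^∞Y} (B^∞h ∘ f^∞)(x) for all x ∈ X. -/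
/- The graph of `B^∞h ∘ f^∞` against `g^∞ ∘ h`, i.e. `{(B^∞h (f^∞ x), g^∞ (h x))}`, is a simulation
for `B(-) × Y`: by finality `B^∞h ∘ f^∞` is the coalgebra morphism from `⟨f, h⟩`, while `g^∞ ∘ h`
is one up to the inequality between `Bh ∘ f` and `g ∘ h`, transported along the monotone map
`B(g^∞)`. -/

theorem SetFunctor.map_map (B : SetFunctor) {X Y Z : Type} (f : X → Y) (g : Y → Z) (b : B.obj X) :
    B.map g (B.map f b) = B.map (g ∘ f) b := by
  rw [B.map_comp]; rfl

namespace OrderedFunctor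

variable (B : OrderedFunctor) {C U V : Type} (e : C → B.obj C) (c : U → B.obj U)
  (d : V → B.obj V) (p : C → U) (q : C → V)

theorem isSimulation_range_of_lax (hp : ∀ x, B.le (c (p x)) (B.map p (e x)))
    (hq : ∀ x, B.le (B.map q (e x)) (d (q x))) :
    B.IsSimulation c d (fun u v => ∃ x, p x = u ∧ q x = v) := by
  rintro _ _ ⟨x, rfl, rfl⟩
  let pair : C → {uv : U × V // ∃ x, p x = uv.1 ∧ q x = uv.2} := fun x => ⟨(p x, q x), x, rfl, rfl⟩
  refine ⟨B.map p (e x), B.map q (e x), hp x, ⟨B.map pair (e x), ?_, ?_⟩, hq x⟩ <;>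
    exact B.map_map pair _ (e x)

theorem sim_of_lax (hp : ∀ x, B.le (c (p x)) (B.map p (e x)))
    (hq : ∀ x, B.le (B.map q (e x)) (d (q x))) (x : C) :
    B.Sim c d (p x) (q x) :=
  ⟨_, B.isSimulation_range_of_lax e c d p q hp hq, x, rfl, rfl⟩

end OrderedFunctor

namespace Cofree

section

variable {B : SetFunctor} (W : Cofree B) {X Y C : Type} (f : C → B.obj C)

theorem cmap_comp_ext (h : X → Y) (p : C → X) : W.cmap h ∘ W.ext f p = W.ext f (h ∘ p) := by
  refine W.ext_unique f (h ∘ p) _ (fun c => ?_) (fun c => ?_)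
  · simp only [Function.comp_apply, cmap, W.θ_ext, B.map_map]
  · simp only [Function.comp_apply, cmap, W.ε_ext]

theorem cmap_comp_coext (h : C → Y) : W.cmap h ∘ W.coext f = W.ext f h :=
  W.cmap_comp_ext f h id

end

section

variable {B : OrderedFunctor} (W : Cofree B.toSetFunctor) {X Y C : Type}

def str (w : W.obj X) : (B.prodConst X).obj (W.obj X) :=
  (W.θ w, W.ε w)

theorem str_ext (f : C → B.obj C) (p : C → X) (c : C) :
    W.str (W.ext f p c) = (B.prodConst X).map (W.ext f p) (f c, p c) :=
  Prod.ext (W.θ_ext f p c) (W.ε_ext f p c)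

theorem str_coext (g : Y → B.obj Y) (y : Y) :
    W.str (W.coext g y) = (B.prodConst Y).map (W.coext g) (g y, y) :=
  W.str_ext g id y

theorem str_cmap_coext (f : X → B.obj X) (h : X → Y) (x : X) :
    W.str (W.cmap h (W.coext f x)) = (B.prodConst Y).map (W.cmap h ∘ W.coext f) (f x, h x) := by
  change W.str ((W.cmap h ∘ W.coext f) x) = _
  rw [W.cmap_comp_coext]
  exact W.str_ext f h x

end

end Cofree

theorem statement3_general (B : OrderedFunctor)
    (W : Cofree B.toSetFunctor) (X Y : Type)
    (f : X → B.obj X) (g : Y → B.obj Y) (h : X → Y) :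
    ((∀ x, B.le (B.map h (f x)) (g (h x))) →
      ∀ x, cofreeSim B W Y (W.cmap h (W.coext f x)) (W.coext g (h x))) ∧
    ((∀ x, B.le (g (h x)) (B.map h (f x))) →
      ∀ x, cofreeSim B W Y (W.coext g (h x)) (W.cmap h (W.coext f x))) := by
  let BY := B.prodConst Y
  have coext_g_comp_h (x : X) :
      BY.map (W.coext g ∘ h) (f x, h x) = BY.map (W.coext g) (B.map h (f x), h x) :=
    (BY.map_map h (W.coext g) _).symm
  constructor
  · intro hle
    refine BY.sim_of_lax (fun x => (f x, h x)) W.str W.str (W.cmap h ∘ W.coext f)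
      (W.coext g ∘ h) (fun x => ?_) (fun x => ?_)
    · exact W.str_cmap_coext f h x ▸ BY.le_refl _
    · rw [coext_g_comp_h, Function.comp_apply, W.str_coext]
      exact BY.map_mono _ ⟨hle x, rfl⟩
  · intro hle
    refine BY.sim_of_lax (fun x => (f x, h x)) W.str W.str (W.coext g ∘ h)
      (W.cmap h ∘ W.coext f) (fun x => ?_) (fun x => ?_)
    · rw [coext_g_comp_h, Function.comp_apply, W.str_coext]
      exact BY.map_mono _ ⟨hle x, rfl⟩
    · exact W.str_cmap_coext f h x ▸ BY.le_refl _

theorem statement3 (B : OrderedFunctor) (hwp : B.toSetFunctor.PreservesWeakPullbacks)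
    (W : Cofree B.toSetFunctor) (X Y : Type)
    (f : X → B.obj X) (g : Y → B.obj Y) (h : X → Y) :
    ((∀ x, B.le (B.map h (f x)) (g (h x))) →
      ∀ x, cofreeSim B W Y (W.cmap h (W.coext f x)) (W.coext g (h x))) ∧
    ((∀ x, B.le (g (h x)) (B.map h (f x))) →
      ∀ x, cofreeSim B W Y (W.coext g (h x)) (W.cmap h (W.coext f x))) :=
  statement3_general B W X Y f g h
end

section
/- Let (B, ⊑) be an ordered functor with cofree comonad B^∞, Σ a Set-functor with free monad Σ*, and ρ : ΣB^∞ ⇒ BΣ* a monotone biGSOS specification. Then the map φ on coalgebras f : Σ*∅ → BΣ*∅ defined by φ(f) = Bμ_∅ ∘ ρ_{Σ*∅} ∘ Σ(f^∞) ∘ ι_∅⁻¹ is monotone with respect to the pointwise order: if f(t) ⊑_{BΣ*∅} g(t) for all t ∈ Σ*∅, then φ(f)(t) ⊑_{BΣ*∅} φ(g)(t) for all t ∈ Σ*∅. -/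
lemma sim_coext (S : SetFunctor) (B : OrderedFunctor) (W : Cofree B.toSetFunctor)
    {X : Type} (f g : X → B.obj X) (hfg : ∀ x, B.le (f x) (g x)) (u : X) :
    cofreeSim B W X (W.coext f u) (W.coext g u) := by
  refine ⟨fun w1 w2 => ∃ v, w1 = W.coext f v ∧ w2 = W.coext g v, ?_, ⟨u, rfl, rfl⟩⟩
  rintro x y ⟨v, rfl, rfl⟩
  refine ⟨(B.map (W.coext f) (g v), v), (B.map (W.coext g) (g v), v), ?_, ?_, ?_⟩
  · constructor
    · show B.le (W.θ (W.coext f v)) (B.map (W.coext f) (g v))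
      rw [show W.θ (W.coext f v) = B.map (W.coext f) (f v) from W.θ_ext f id v]
      exact B.map_mono _ (hfg v)
    · show W.ε (W.coext f v) = v
      exact W.ε_ext f id v
  · refine ⟨(B.map (fun m : X =>
      (⟨(W.coext f m, W.coext g m), ⟨m, rfl, rfl⟩⟩ :
        {p : W.obj X × W.obj X // ∃ v, p.1 = W.coext f v ∧ p.2 = W.coext g v})) (g v), v),
      ?_, ?_⟩
    · show (B.map _ (B.map _ (g v)), v) = _
      refine Prod.ext ?_ rfl
      show (B.map _ ∘ B.map _) (g v) = _
      rw [← B.map_comp]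
      rfl
    · show (B.map _ (B.map _ (g v)), v) = _
      refine Prod.ext ?_ rfl
      show (B.map _ ∘ B.map _) (g v) = _
      rw [← B.map_comp]
      rfl
  · show B.le (B.map (W.coext g) (g v)) (W.θ (W.coext g v)) ∧ v = W.ε (W.coext g v)
    constructor
    · rw [show W.θ (W.coext g v) = B.map (W.coext g) (g v) from W.θ_ext g id v]
      exact B.le_refl _
    · exact (W.ε_ext g id v).symm

theorem statement4 (S : SetFunctor) (B : OrderedFunctor)
    (W : Cofree B.toSetFunctor) (M : FreeMonad S)
    (ρ : BiGSOS S B W M) (hmono : ρ.Monotone)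
    (f g : M.obj Empty → B.obj (M.obj Empty))
    (hfg : ∀ t, B.le (f t) (g t)) :
    ∀ t, B.le (phi0 ρ f t) (phi0 ρ g t) := by
  intro t
  unfold phi0
  cases h : M.dest t with
  | inr x => exact x.elim
  | inl s =>
    simp only [Sum.elim_inl]
    apply B.map_mono
    apply hmono
    refine ⟨S.map (fun m : M.obj Empty =>
      (⟨(W.coext f m, W.coext g m), sim_coext S B W f g hfg m⟩ :
        {p : W.obj (M.obj Empty) × W.obj (M.obj Empty) //
          cofreeSim B W (M.obj Empty) p.1 p.2})) s, ?_, ?_⟩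
    · show (S.map _ ∘ S.map _) s = _
      rw [← S.map_comp]
      rfl
    · show (S.map _ ∘ S.map _) s = _
      rw [← S.map_comp]
      rfl
end

section
/- Let (B, ⊑) be an ordered functor with cofree comonad B^∞, Σ a Set-functor with free monad Σ*, and ρ : ΣB^∞ ⇒ BΣ* a monotone biGSOS specification. If BΣ*∅ is a pointed DCPO under ⊑_{BΣ*∅}, then ρ has a least supported model: there is a supported model m : Σ*∅ → BΣ*∅ such that for every supported model f of ρ, m(t) ⊑_{BΣ*∅} f(t) for all t ∈ Σ*∅. -/
/-- Pataraia's theorem: a monotone endomap of a pointed DCPO has a least fixed point. -/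
theorem pataraia_aux {α : Type} (le : α → α → Prop)
    (hrefl : ∀ a, le a a) (htrans : ∀ {a b c : α}, le a b → le b c → le a c)
    (h : IsPointedDCPO le) (φ : α → α) (hφ : ∀ {a b}, le a b → le (φ a) (φ b)) :
    ∃ m, φ m = m ∧ ∀ f, φ f = f → le m f := by
  classical
  obtain ⟨hanti, ⟨bot, hbot⟩, hsup⟩ := h
  let Closed : Set α → Prop := fun A =>
    bot ∈ A ∧ (∀ x ∈ A, φ x ∈ A) ∧
    ∀ D : Set α, D ⊆ A → D.Nonempty → DirectedOn le D → ∀ u, IsLubRel le D u → u ∈ A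
  let P0 : Set α := {x | ∀ A, Closed A → x ∈ A}
  have hP0 : Closed P0 := by
    refine ⟨fun A hA => hA.1, fun x hx A hA => hA.2.1 x (hx A hA), ?_⟩
    intro D hD hne hdir u hu A hA
    exact hA.2.2 D (fun d hd => hD hd A hA) hne hdir u hu
  have hinfl : ∀ x ∈ P0, le x (φ x) := by
    have hcl : Closed {x | x ∈ P0 ∧ le x (φ x)} := by
      refine ⟨⟨hP0.1, hbot _⟩, ?_, ?_⟩
      · rintro x ⟨hx1, hx2⟩; exact ⟨hP0.2.1 x hx1, hφ hx2⟩
      · intro D hD hne hdir u hu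
        refine ⟨hP0.2.2 D (fun d hd => (hD hd).1) hne hdir u hu, ?_⟩
        exact hu.2 (φ u) (fun a ha => htrans (hD ha).2 (hφ (hu.1 a ha)))
    intro x hx; exact (hx _ hcl).2
  let H : Set (α → α) := {h | (∀ x ∈ P0, h x ∈ P0) ∧ (∀ x ∈ P0, le x (h x)) ∧
    ∀ x y, x ∈ P0 → y ∈ P0 → le x y → le (h x) (h y)}
  have hid : (id : α → α) ∈ H := ⟨fun x hx => hx, fun x _ => hrefl x, fun _ _ _ _ h => h⟩
  have hcomp : ∀ h k : α → α, h ∈ H → k ∈ H → (h ∘ k) ∈ H := by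
    intro h k hh hk
    exact ⟨fun x hx => hh.1 _ (hk.1 x hx),
      fun x hx => htrans (hk.2.1 x hx) (hh.2.1 _ (hk.1 x hx)),
      fun x y hx hy hxy => hh.2.2 _ _ (hk.1 x hx) (hk.1 y hy) (hk.2.2 x y hx hy hxy)⟩
  let Dx : α → Set α := fun x => (fun h : α → α => h x) '' H
  have hDxsub : ∀ x ∈ P0, Dx x ⊆ P0 := by
    rintro x hx a ⟨h, hh, rfl⟩; exact hh.1 x hx
  have hDxne : ∀ x, (Dx x).Nonempty := fun x => ⟨x, id, hid, rfl⟩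
  have hDxdir : ∀ x ∈ P0, DirectedOn le (Dx x) := by
    rintro x hx a ⟨h, hh, rfl⟩ b ⟨k, hk, rfl⟩
    refine ⟨(h ∘ k) x, ⟨h ∘ k, hcomp h k hh hk, rfl⟩, ?_, ?_⟩
    · exact hh.2.2 _ _ hx (hk.1 x hx) (hk.2.1 x hx)
    · exact hh.2.1 _ (hk.1 x hx)
  have hsupDx : ∀ x, x ∈ P0 → ∃ u, IsLubRel le (Dx x) u := by
    intro x hx; exact hsup _ (hDxne x) (hDxdir x hx)
  let t : α → α := fun x => if hx : x ∈ P0 then Classical.choose (hsupDx x hx) else x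
  have ht : ∀ x ∈ P0, IsLubRel le (Dx x) (t x) := by
    intro x hx
    simp only [t, dif_pos hx]
    exact Classical.choose_spec (hsupDx x hx)
  have htP0 : ∀ x ∈ P0, t x ∈ P0 :=
    fun x hx => hP0.2.2 (Dx x) (hDxsub x hx) (hDxne x) (hDxdir x hx) (t x) (ht x hx)
  have htmono : ∀ x y, x ∈ P0 → y ∈ P0 → le x y → le (t x) (t y) := by
    intro x y hx hy hxy
    refine (ht x hx).2 (t y) ?_
    rintro a ⟨h, hh, rfl⟩
    exact htrans (hh.2.2 x y hx hy hxy) ((ht y hy).1 _ ⟨h, hh, rfl⟩)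
  have htH : t ∈ H := by
    refine ⟨htP0, fun x hx => (ht x hx).1 x ⟨id, hid, rfl⟩, htmono⟩
  have hmax : ∀ h ∈ H, ∀ x ∈ P0, le (h x) (t x) := by
    intro h hh x hx; exact (ht x hx).1 _ ⟨h, hh, rfl⟩
  have hφtH : (φ ∘ t) ∈ H := by
    refine ⟨fun x hx => hP0.2.1 _ (htP0 x hx),
      fun x hx => htrans (htH.2.1 x hx) (hinfl _ (htP0 x hx)), ?_⟩
    intro x y hx hy hxy; exact hφ (htmono x y hx hy hxy)
  have hfix : ∀ x ∈ P0, φ (t x) = t x := by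
    intro x hx
    exact hanti _ _ (hmax _ hφtH x hx) (hinfl _ (htP0 x hx))
  refine ⟨t bot, hfix bot hP0.1, ?_⟩
  intro f hf
  have hcl : Closed {x | le x f} := by
    refine ⟨hbot f, ?_, ?_⟩
    · intro x hx
      have := hφ hx
      rwa [hf] at this
    · intro D hD _ _ u hu; exact hu.2 f (fun a ha => hD ha)
  exact htP0 bot hP0.1 _ hcl

/-- A pointwise pointed DCPO structure on a function space. -/
theorem pi_dcpo_aux {I β : Type} (le : β → β → Prop) (h : IsPointedDCPO le) :
    IsPointedDCPO (fun f g : I → β => ∀ i, le (f i) (g i)) := by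
  classical
  obtain ⟨hanti, ⟨bot, hbot⟩, hsup⟩ := h
  refine ⟨?_, ⟨fun _ => bot, fun a i => hbot (a i)⟩, ?_⟩
  · intro a b hab hba; funext i; exact hanti _ _ (hab i) (hba i)
  · intro D hne hdir
    have hex : ∀ i : I, ∃ u, IsLubRel le ((fun f : I → β => f i) '' D) u := by
      intro i
      refine hsup _ ⟨hne.choose i, hne.choose, hne.choose_spec, rfl⟩ ?_
      rintro a ⟨f, hf, rfl⟩ b ⟨g, hg, rfl⟩
      obtain ⟨k, hk, hfk, hgk⟩ := hdir f hf g hg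
      exact ⟨k i, ⟨k, hk, rfl⟩, hfk i, hgk i⟩
    choose u hu using hex
    refine ⟨u, ?_, ?_⟩
    · intro f hf i; exact (hu i).1 _ ⟨f, hf, rfl⟩
    · intro v hv i
      refine (hu i).2 (v i) ?_
      rintro a ⟨f, hf, rfl⟩; exact hv f hf i

theorem SetFunctor.map_comp_apply (B : SetFunctor) {X Y Z : Type} (f : X → Y) (g : Y → Z)
    (x : B.obj X) : B.map g (B.map f x) = B.map (g ∘ f) x := by
  rw [B.map_comp]; rfl

theorem statement6 (S : SetFunctor) (B : OrderedFunctor)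
    (W : Cofree B.toSetFunctor) (M : FreeMonad S)
    (ρ : BiGSOS S B W M) (hmono : ρ.Monotone)
    (hdcpo : IsPointedDCPO (fun a b : B.obj (M.obj Empty) => B.le a b)) :
    ∃ m : M.obj Empty → B.obj (M.obj Empty), IsLeastSupportedModel ρ m := by
  classical
  let le' : (M.obj Empty → B.obj (M.obj Empty)) → (M.obj Empty → B.obj (M.obj Empty)) → Prop :=
    fun f g => ∀ t, B.le (f t) (g t)
  have hd : IsPointedDCPO le' := pi_dcpo_aux _ hdcpo
  -- coinductive extensions of pointwise-ordered coalgebras are pointwise similar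
  have hsim : ∀ f g : M.obj Empty → B.obj (M.obj Empty), le' f g →
      ∀ x, cofreeSim B W (M.obj Empty) (W.coext f x) (W.coext g x) := by
    intro f g hfg x
    refine ⟨fun a b => ∃ x : M.obj Empty, a = W.coext f x ∧ b = W.coext g x, ?_, ⟨x, rfl, rfl⟩⟩
    rintro a b ⟨x', rfl, rfl⟩
    refine ⟨(B.map (W.coext f) (g x'), x'), (W.θ (W.coext g x'), W.ε (W.coext g x')),
      ⟨?_, ?_⟩, ?_, (B.prodConst (M.obj Empty)).le_refl _⟩
    · show B.le (W.θ (W.coext f x')) (B.map (W.coext f) (g x'))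
      rw [show W.θ (W.coext f x') = B.map (W.coext f) (f x') from W.θ_ext f id x']
      exact B.map_mono _ (hfg x')
    · show W.ε (W.coext f x') = x'
      exact W.ε_ext f id x'
    · -- relation lifting witness
      refine ⟨(B.map (fun x'' : M.obj Empty =>
          (⟨(W.coext f x'', W.coext g x''), ⟨x'', rfl, rfl⟩⟩ :
            {p : W.obj (M.obj Empty) × W.obj (M.obj Empty) //
              ∃ x : M.obj Empty, p.1 = W.coext f x ∧ p.2 = W.coext g x})) (g x'), x'),
        ?_, ?_⟩
      · show (B.map _ (B.map _ (g x')), x') = (B.map (W.coext f) (g x'), x')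
        rw [B.toSetFunctor.map_comp_apply]; rfl
      · show (B.map _ (B.map _ (g x')), x') = (W.θ (W.coext g x'), W.ε (W.coext g x'))
        rw [B.toSetFunctor.map_comp_apply,
          show W.θ (W.coext g x') = B.map (W.coext g) (g x') from W.θ_ext g id x',
          show W.ε (W.coext g x') = x' from W.ε_ext g id x']
        rfl
  -- phi0 is monotone
  have hmono0 : ∀ {f g}, le' f g → le' (phi0 ρ f) (phi0 ρ g) := by
    intro f g hfg t
    show B.le (phi0 ρ f t) (phi0 ρ g t)
    unfold phi0
    cases hdt : M.dest (X := Empty) t with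
    | inl s =>
      simp only [Sum.elim_inl]
      refine B.map_mono _ (hmono _ _ _ ?_)
      refine ⟨S.map (fun x : M.obj Empty =>
        (⟨(W.coext f x, W.coext g x), hsim f g hfg x⟩ :
          {p : W.obj (M.obj Empty) × W.obj (M.obj Empty) //
            cofreeSim B W (M.obj Empty) p.1 p.2})) s, ?_, ?_⟩
      · rw [S.map_comp_apply]; rfl
      · rw [S.map_comp_apply]; rfl
    | inr x => exact x.elim
  -- supported models are exactly fixed points of phi0
  have hfix_of_supp : ∀ f, IsSupportedModel ρ f → phi0 ρ f = f := by
    intro f hf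
    funext t
    have helim := M.elim_dest t
    unfold phi0
    cases hdt : M.dest (X := Empty) t with
    | inl s =>
      rw [hdt] at helim
      simp only [Sum.elim_inl] at helim ⊢
      rw [← helim, hf s]
    | inr x => exact x.elim
  have hsupp_of_fix : ∀ f, phi0 ρ f = f → IsSupportedModel ρ f := by
    intro f hf s
    have hc := congrFun hf (M.ι s)
    unfold phi0 at hc
    rw [M.dest_ι] at hc
    simp only [Sum.elim_inl] at hc
    exact hc.symm
  obtain ⟨m, hm, hleast⟩ := pataraia_aux le'
    (fun f t => B.le_refl _) (fun h1 h2 t => B.le_trans (h1 t) (h2 t))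
    hd (phi0 ρ) hmono0
  exact ⟨m, hsupp_of_fix m hm, fun f hf => hleast f (hfix_of_supp f hf)⟩
end

section
/- Let (B, ⊑) be a DCPO_⊥-ordered functor with cofree comonad B^∞, Σ a Set-functor with free monad Σ*, and ρ : ΣB^∞ ⇒ BΣ* a monotone biGSOS specification. For any B-coalgebra c : X → BX, the function φ_c on coalgebras f : Σ*X → BΣ*X defined by φ_c(f) = [Bμ_X ∘ ρ_{Σ*X} ∘ Σ(f^∞), Bη_X ∘ c] ∘ [ι_X, η_X]⁻¹ is monotone with respect to the pointwise order on coalgebras Σ*X → BΣ*X. -/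
theorem statement7 (S : SetFunctor) (B : DCPOOrderedFunctor)
    (W : Cofree B.toOrderedFunctor.toSetFunctor) (M : FreeMonad S)
    (ρ : BiGSOS S B.toOrderedFunctor W M) (hmono : ρ.Monotone)
    (X : Type) (c : X → B.obj X)
    (f g : M.obj X → B.obj (M.obj X)) (hfg : ∀ t, B.le (f t) (g t)) :
    ∀ t, B.le (phiC ρ c f t) (phiC ρ c g t) := by
  intro t
  unfold phiC
  cases h : M.dest t with
  | inr x => simp only [Sum.elim_inr]; exact B.le_refl _
  | inl s =>
    simp only [Sum.elim_inl]
    apply B.map_mono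
    apply hmono
    -- relation R
    have hsim : (B.toOrderedFunctor.prodConst (M.obj X)).IsSimulation
        (fun w => (W.θ w, W.ε w)) (fun w => (W.θ w, W.ε w))
        (fun a b => ∃ x, a = W.coext f x ∧ b = W.coext g x) := by
      rintro a b ⟨x, rfl, rfl⟩
      refine ⟨(B.map (W.coext f) (g x), x), (B.map (W.coext g) (g x), x), ?_, ?_, ?_⟩
      · constructor
        · show B.le (W.θ (W.coext f x)) _
          have : W.θ (W.coext f x) = B.map (W.coext f) (f x) := W.θ_ext f id x
          rw [this]
          exact B.map_mono _ (hfg x)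
        · exact W.ε_ext f id x
      · refine ⟨(B.map (fun y => (⟨(W.coext f y, W.coext g y), ⟨y, rfl, rfl⟩⟩ :
          {p : W.obj (M.obj X) × W.obj (M.obj X) // ∃ x, p.1 = W.coext f x ∧ p.2 = W.coext g x})) (g x), x),
          ?_, ?_⟩
        · show (B.map _ (B.map _ (g x)), x) = _
          rw [← Function.comp_apply (f := B.map _), ← B.map_comp]
          rfl
        · show (B.map _ (B.map _ (g x)), x) = _
          rw [← Function.comp_apply (f := B.map _), ← B.map_comp]
          rfl
      · constructor
        · show B.le _ (W.θ (W.coext g x))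
          have : W.θ (W.coext g x) = B.map (W.coext g) (g x) := W.θ_ext g id x
          rw [this]
          exact B.le_refl _
        · exact (W.ε_ext g id x).symm
    refine ⟨S.map (fun w => (⟨(W.coext f w, W.coext g w),
        ⟨_, hsim, w, rfl, rfl⟩⟩ :
        {p : W.obj (M.obj X) × W.obj (M.obj X) // cofreeSim B.toOrderedFunctor W (M.obj X) p.1 p.2})) s, ?_, ?_⟩
    · rw [← Function.comp_apply (f := S.map _), ← S.map_comp]; rfl
    · rw [← Function.comp_apply (f := S.map _), ← S.map_comp]; rfl
end
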